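/- Let U : ℝ^d → ℝ be C² with m·I ⪯ ∇²U(x) ⪯ M·I for all x, and let L be a symmetric positive definite matrix with smallest eigenvalue σ_d > 0. If sup_x ‖∇²U(x) − L²‖ ≤ σ_d²·ε, then the preconditioned condition number κ_L := sup_x ‖L⁻¹∇²U(x)L⁻¹‖ · sup_x ‖L ∇²U(x)⁻¹ L‖ satisfies κ_L ≤ (1+ε)(1 + (σ_1²/m)ε), where σ_1 is the largest eigenvalue of L. -/

import Mathlib

open Matrix MeasureTheory

noncomputable def specNorm {d : ℕ} (A : Matrix (Fin d) (Fin d) ℝ) : ℝ :=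
  ‖Matrix.toEuclideanCLM (𝕜 := ℝ) A‖

theorem isHermTransposeMulSelf {m n : ℕ} (A : Matrix (Fin m) (Fin n) ℝ) :
    (Aᵀ * A).IsHermitian := by
  simpa [Matrix.conjTranspose_eq_transpose_of_trivial] using
    Matrix.isHermitian_conjTranspose_mul_self A

noncomputable def eigList {d : ℕ} (A : Matrix (Fin d) (Fin d) ℝ) (hA : A.IsHermitian) : List ℝ :=
  Multiset.sort (Multiset.map hA.eigenvalues Finset.univ.val) (· ≤ ·)

/-- `ithEig A hA i` : the `i`-th largest eigenvalue of `A` (0-indexed: `i = 0` is the largest,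
`i = d - 1` the smallest). -/
noncomputable def ithEig {d : ℕ} (A : Matrix (Fin d) (Fin d) ℝ) (hA : A.IsHermitian)
    (i : Fin d) : ℝ :=
  (eigList A hA).getD (d - 1 - i) 0

/-- `singVal A i` : the `i`-th largest singular value of `A` (0-indexed). -/
noncomputable def singVal {m n : ℕ} (A : Matrix (Fin m) (Fin n) ℝ) (i : Fin n) : ℝ :=
  Real.sqrt (ithEig (Aᵀ * A) (isHermTransposeMulSelf A) i)

/-- Loewner order: `Loewner A B` iff `A ⪯ B`. -/
def Loewner {d : ℕ} (A B : Matrix (Fin d) (Fin d) ℝ) : Prop := (B - A).PosSemidef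

/-! ### Auxiliary lemmas -/

section Aux

open scoped RealInnerProductSpace

lemma specNorm_mul_le {d : ℕ} (A B : Matrix (Fin d) (Fin d) ℝ) :
    specNorm (A * B) ≤ specNorm A * specNorm B := by
  rw [specNorm, _root_.map_mul]; exact norm_mul_le _ _

lemma specNorm_one_le {d : ℕ} : specNorm (1 : Matrix (Fin d) (Fin d) ℝ) ≤ 1 := by
  rw [specNorm, _root_.map_one, ContinuousLinearMap.one_def]
  exact ContinuousLinearMap.norm_id_le

lemma specNorm_neg {d : ℕ} (A : Matrix (Fin d) (Fin d) ℝ) : specNorm (-A) = specNorm A := by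
  rw [specNorm, _root_.map_neg, norm_neg, specNorm]

lemma specNorm_nonneg {d : ℕ} (A : Matrix (Fin d) (Fin d) ℝ) : 0 ≤ specNorm A := norm_nonneg _

lemma specNorm_add_le {d : ℕ} (A B : Matrix (Fin d) (Fin d) ℝ) :
    specNorm (A + B) ≤ specNorm A + specNorm B := by
  rw [specNorm, _root_.map_add, specNorm, specNorm]; exact norm_add_le _ _

lemma specNorm_diagonal_le {d : ℕ} {g : Fin d → ℝ} {c : ℝ} (hc : 0 ≤ c)
    (h : ∀ i, |g i| ≤ c) : specNorm (Matrix.diagonal g) ≤ c := by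
  rw [specNorm]
  refine ContinuousLinearMap.opNorm_le_bound _ hc fun x => ?_
  have hx : ∀ i, (toEuclideanCLM (𝕜 := ℝ) (diagonal g) x) i = g i * x i := by
    intro i
    have h1 : (toEuclideanCLM (𝕜 := ℝ) (diagonal g) x) i
        = (toLin' (diagonal g) (WithLp.equiv _ _ x)) i := by
      rfl
    rw [h1]
    simp [Matrix.toLin'_apply, Matrix.mulVec_diagonal]
  rw [EuclideanSpace.norm_eq, EuclideanSpace.norm_eq]
  rw [show c * Real.sqrt (∑ i, ‖x i‖ ^ 2) = Real.sqrt (c ^ 2 * ∑ i, ‖x i‖ ^ 2) by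
    rw [Real.sqrt_mul (sq_nonneg c), Real.sqrt_sq hc]]
  refine Real.sqrt_le_sqrt ?_
  rw [Finset.mul_sum]
  refine Finset.sum_le_sum fun i _ => ?_
  rw [hx i]
  simp only [Real.norm_eq_abs, sq_abs]
  rw [mul_pow]
  exact mul_le_mul_of_nonneg_right
    (sq_le_sq' (abs_le.mp (h i)).1 (abs_le.mp (h i)).2) (sq_nonneg _)

lemma spectral_real {d : ℕ} {A : Matrix (Fin d) (Fin d) ℝ} (hA : A.IsHermitian) :
    A = (hA.eigenvectorUnitary : Matrix (Fin d) (Fin d) ℝ) * diagonal hA.eigenvalues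
      * star (hA.eigenvectorUnitary : Matrix (Fin d) (Fin d) ℝ) := by
  have h := hA.spectral_theorem
  rwa [show (RCLike.ofReal ∘ hA.eigenvalues : Fin d → ℝ) = hA.eigenvalues from
    funext fun i => rfl] at h

lemma conj_smul_one {d : ℕ} {U : Matrix (Fin d) (Fin d) ℝ} (hU : U * star U = 1) (c : ℝ) :
    U * (c • (1 : Matrix (Fin d) (Fin d) ℝ)) * star U = c • 1 := by
  rw [mul_smul_comm, mul_one, smul_mul_assoc, hU]

lemma conj_psd {d : ℕ} (U : Matrix (Fin d) (Fin d) ℝ) {f : Fin d → ℝ} (hf : ∀ i, 0 ≤ f i) :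
    (U * diagonal f * star U).PosSemidef := by
  simpa [Matrix.star_eq_conjTranspose] using
    (Matrix.posSemidef_diagonal_iff.mpr hf).mul_mul_conjTranspose_same U

/-- Norm bound for a unitary conjugate of a diagonal matrix. -/
lemma specNorm_conj_le {d : ℕ} {U : Matrix (Fin d) (Fin d) ℝ}
    (hUmem : U ∈ Matrix.unitaryGroup (Fin d) ℝ) {g : Fin d → ℝ} {c : ℝ} (hc : 0 ≤ c)
    (h : ∀ i, |g i| ≤ c) : specNorm (U * diagonal g * star U) ≤ c := by
  have hUu : toEuclideanCLM (𝕜 := ℝ) U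
      ∈ unitary (EuclideanSpace ℝ (Fin d) →L[ℝ] EuclideanSpace ℝ (Fin d)) := by
    rw [Unitary.mem_iff]
    constructor
    · rw [← map_star, ← _root_.map_mul, Matrix.mem_unitaryGroup_iff'.mp hUmem, _root_.map_one]
    · rw [← map_star, ← _root_.map_mul, Matrix.mem_unitaryGroup_iff.mp hUmem, _root_.map_one]
  calc specNorm (U * diagonal g * star U)
      = ‖toEuclideanCLM (𝕜 := ℝ) U * toEuclideanCLM (𝕜 := ℝ) (diagonal g)
          * star (toEuclideanCLM (𝕜 := ℝ) U)‖ := by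
        rw [specNorm, _root_.map_mul, _root_.map_mul, map_star]
    _ = ‖toEuclideanCLM (𝕜 := ℝ) U * toEuclideanCLM (𝕜 := ℝ) (diagonal g)‖ :=
        CStarRing.norm_mul_mem_unitary _ (Unitary.star_mem hUu)
    _ = ‖toEuclideanCLM (𝕜 := ℝ) (diagonal g)‖ := CStarRing.norm_mem_unitary_mul _ hUu
    _ ≤ c := specNorm_diagonal_le hc h

lemma specNorm_le_of_eig {d : ℕ} {A : Matrix (Fin d) (Fin d) ℝ}
    (hA : A.IsHermitian) {c : ℝ} (hc : 0 ≤ c) (h : ∀ i, |hA.eigenvalues i| ≤ c) :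
    specNorm A ≤ c := by
  rw [spectral_real hA]
  exact specNorm_conj_le hA.eigenvectorUnitary.2 hc h

lemma dotProduct_eigvec {d : ℕ} {A : Matrix (Fin d) (Fin d) ℝ} (hA : A.IsHermitian) (i : Fin d) :
    (⇑(hA.eigenvectorBasis i) : Fin d → ℝ) ⬝ᵥ (⇑(hA.eigenvectorBasis i) : Fin d → ℝ) = 1 := by
  have h1 : (inner ℝ (hA.eigenvectorBasis i) (hA.eigenvectorBasis i) : ℝ) = 1 := by
    rw [real_inner_self_eq_norm_mul_norm, hA.eigenvectorBasis.orthonormal.1 i, one_mul]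
  rw [← h1, PiLp.inner_apply]
  simp [dotProduct, mul_comm, sq]

lemma eigenvalues_eq_real {d : ℕ} {A : Matrix (Fin d) (Fin d) ℝ} (hA : A.IsHermitian) (i : Fin d) :
    hA.eigenvalues i
      = (⇑(hA.eigenvectorBasis i) : Fin d → ℝ) ⬝ᵥ (A *ᵥ ⇑(hA.eigenvectorBasis i)) := by
  have := hA.eigenvalues_eq i
  simpa using this

lemma le_eig_of_psd {d : ℕ} {A : Matrix (Fin d) (Fin d) ℝ} (hA : A.IsHermitian) {c : ℝ}
    (h : (A - c • (1 : Matrix (Fin d) (Fin d) ℝ)).PosSemidef) (i : Fin d) :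
    c ≤ hA.eigenvalues i := by
  have hv := h.dotProduct_mulVec_nonneg (⇑(hA.eigenvectorBasis i))
  simp only [Matrix.sub_mulVec, Matrix.smul_mulVec, Matrix.one_mulVec, dotProduct_sub,
    dotProduct_smul, smul_eq_mul, star_trivial] at hv
  rw [dotProduct_eigvec hA i, ← eigenvalues_eq_real hA i, mul_one] at hv
  linarith

lemma inv_spectral {d : ℕ} {A : Matrix (Fin d) (Fin d) ℝ} (hA : A.IsHermitian)
    (hnz : ∀ i, hA.eigenvalues i ≠ 0) :
    A⁻¹ = (hA.eigenvectorUnitary : Matrix (Fin d) (Fin d) ℝ)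
        * diagonal (fun i => (hA.eigenvalues i)⁻¹)
        * star (hA.eigenvectorUnitary : Matrix (Fin d) (Fin d) ℝ)
      ∧ A * A⁻¹ = 1 ∧ A⁻¹ * A = 1 := by
  set U : Matrix (Fin d) (Fin d) ℝ := (hA.eigenvectorUnitary : Matrix (Fin d) (Fin d) ℝ) with hUdef
  have hU1 : U * star U = 1 := Matrix.mem_unitaryGroup_iff.mp hA.eigenvectorUnitary.2
  have hU2 : star U * U = 1 := Matrix.mem_unitaryGroup_iff'.mp hA.eigenvectorUnitary.2
  set B : Matrix (Fin d) (Fin d) ℝ := U * diagonal (fun i => (hA.eigenvalues i)⁻¹) * star U with hB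
  have hspec : A = U * diagonal hA.eigenvalues * star U := spectral_real hA
  have hAB : A * B = 1 := by
    rw [hspec, hB]
    calc U * diagonal hA.eigenvalues * star U
          * (U * diagonal (fun i => (hA.eigenvalues i)⁻¹) * star U)
        = U * diagonal hA.eigenvalues * (star U * U)
          * diagonal (fun i => (hA.eigenvalues i)⁻¹) * star U := by
          simp only [Matrix.mul_assoc]
      _ = U * (diagonal hA.eigenvalues * diagonal (fun i => (hA.eigenvalues i)⁻¹)) * star U := by
          rw [hU2, Matrix.mul_one]; simp only [Matrix.mul_assoc]
      _ = U * diagonal (fun i => hA.eigenvalues i * (hA.eigenvalues i)⁻¹) * star U := by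
          rw [Matrix.diagonal_mul_diagonal]
      _ = U * star U := by
          rw [show (fun i => hA.eigenvalues i * (hA.eigenvalues i)⁻¹) = fun _ : Fin d => (1:ℝ) from
            funext fun i => mul_inv_cancel₀ (hnz i), Matrix.diagonal_one, Matrix.mul_one]
      _ = 1 := hU1
  have hinv : A⁻¹ = B := Matrix.inv_eq_right_inv hAB
  exact ⟨hinv, by rw [hinv]; exact hAB, by rw [hinv]; exact mul_eq_one_comm.mp hAB⟩

lemma eigList_length {d : ℕ} (A : Matrix (Fin d) (Fin d) ℝ) (hA : A.IsHermitian) :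
    (eigList A hA).length = d := by
  rw [eigList, Multiset.length_sort, Multiset.card_map]
  simp

lemma eigList_sorted {d : ℕ} (A : Matrix (Fin d) (Fin d) ℝ) (hA : A.IsHermitian) :
    (eigList A hA).Pairwise (· ≤ ·) := Multiset.pairwise_sort _ _

lemma mem_eigList {d : ℕ} (A : Matrix (Fin d) (Fin d) ℝ) (hA : A.IsHermitian) (i : Fin d) :
    hA.eigenvalues i ∈ eigList A hA := by
  rw [eigList, Multiset.mem_sort]
  exact Multiset.mem_map_of_mem _ (Finset.mem_univ_val i)

lemma eigList_mem_eig {d : ℕ} (A : Matrix (Fin d) (Fin d) ℝ) (hA : A.IsHermitian) {x : ℝ}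
    (hx : x ∈ eigList A hA) : ∃ i, hA.eigenvalues i = x := by
  rw [eigList, Multiset.mem_sort, Multiset.mem_map] at hx
  obtain ⟨i, _, hi⟩ := hx
  exact ⟨i, hi⟩

lemma sorted_getD_zero_le {l : List ℝ} (hl : l.Pairwise (· ≤ ·)) {x : ℝ} (hx : x ∈ l) :
    l.getD 0 0 ≤ x := by
  cases l with
  | nil => simp at hx
  | cons a t =>
    rcases List.mem_cons.mp hx with rfl | hx
    · simp
    · simpa using (List.pairwise_cons.mp hl).1 x hx

lemma sorted_le_getD_last {l : List ℝ} (hl : l.Pairwise (· ≤ ·)) {x : ℝ} (hx : x ∈ l) :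
    x ≤ l.getD (l.length - 1) 0 := by
  induction l with
  | nil => simp at hx
  | cons a t ih =>
    obtain ⟨ha, ht⟩ := List.pairwise_cons.mp hl
    cases t with
    | nil =>
      rcases List.mem_cons.mp hx with rfl | hx
      · simp
      · simp at hx
    | cons b t' =>
      have hlen : (a :: b :: t').length - 1 = (b :: t').length := by simp
      rw [hlen]
      simp only [List.length_cons, List.getD_cons_succ]
      simp only [List.length_cons, Nat.add_sub_cancel] at ih
      rcases List.mem_cons.mp hx with rfl | hx
      · have hmem : (b :: t').getD ((b :: t').length - 1) 0 ∈ (b :: t') := by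
          rw [List.getD_eq_getElem _ _ (by simp)]
          exact List.getElem_mem _
        simpa using le_trans (ha _ hmem) (le_refl _)
      · simpa using ih ht hx

lemma getD_zero_mem {l : List ℝ} (hl : l ≠ []) : l.getD 0 0 ∈ l := by
  cases l with
  | nil => simp at hl
  | cons a t => simp

/-- Main auxiliary lemma with abstract `σd`, `σ1`. -/
lemma kappa_aux {d : ℕ} (hd : 0 < d)
    (Hess : (Fin d → ℝ) → Matrix (Fin d) (Fin d) ℝ)
    (L : Matrix (Fin d) (Fin d) ℝ) (hL : L.PosDef)
    (m ε σd σ1 : ℝ) (hm : 0 < m) (hε : 0 < ε)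
    (hHerm : ∀ x, (Hess x).IsHermitian)
    (hlow : ∀ x, (Hess x - m • (1 : Matrix (Fin d) (Fin d) ℝ)).PosSemidef)
    (hσd_le : ∀ i, σd ≤ hL.isHermitian.eigenvalues i)
    (hle_σ1 : ∀ i, hL.isHermitian.eigenvalues i ≤ σ1)
    (hσd_pos : 0 < σd)
    (hnorm : ∀ x, specNorm (Hess x - L * L) ≤ σd ^ 2 * ε) :
    (⨆ x, specNorm (L⁻¹ * Hess x * L⁻¹)) * (⨆ x, specNorm (L * (Hess x)⁻¹ * L)) ≤
      (1 + ε) * (1 + σ1 ^ 2 / m * ε) := by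
  have hσdσ1 : σd ≤ σ1 := le_trans (hσd_le ⟨0, hd⟩) (hle_σ1 ⟨0, hd⟩)
  have hσ1_pos : 0 < σ1 := lt_of_lt_of_le hσd_pos hσdσ1
  -- facts about L
  obtain ⟨hLinv_eq, hLL, hLL'⟩ :=
    inv_spectral hL.isHermitian (fun i => ne_of_gt (hL.eigenvalues_pos i))
  have normL : specNorm L ≤ σ1 :=
    specNorm_le_of_eig hL.isHermitian hσ1_pos.le
      (fun i => by rw [abs_of_nonneg (hL.eigenvalues_pos i).le]; exact hle_σ1 i)
  have normLinv : specNorm L⁻¹ ≤ σd⁻¹ := by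
    rw [hLinv_eq]
    refine specNorm_conj_le hL.isHermitian.eigenvectorUnitary.2 (by positivity) fun i => ?_
    rw [abs_of_nonneg (inv_nonneg.mpr (hL.eigenvalues_pos i).le)]
    exact inv_anti₀ hσd_pos (hσd_le i)
  -- supremum bounds
  have hS1 : ∀ x, specNorm (L⁻¹ * Hess x * L⁻¹) ≤ 1 + ε := by
    intro x
    have h1 : L⁻¹ * (L * L) * L⁻¹ = 1 := by
      simp only [Matrix.mul_assoc, hLL, Matrix.mul_one, hLL']
    have hkey : L⁻¹ * Hess x * L⁻¹ = 1 + L⁻¹ * (Hess x - L * L) * L⁻¹ := by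
      rw [Matrix.mul_sub, Matrix.sub_mul, h1]
      abel
    have hE : specNorm (L⁻¹ * (Hess x - L * L) * L⁻¹) ≤ ε := by
      have e1 := specNorm_mul_le (L⁻¹ * (Hess x - L * L)) L⁻¹
      have e2 := specNorm_mul_le L⁻¹ (Hess x - L * L)
      have step : specNorm (L⁻¹ * (Hess x - L * L) * L⁻¹) ≤ σd⁻¹ * (σd ^ 2 * ε) * σd⁻¹ := by
        calc specNorm (L⁻¹ * (Hess x - L * L) * L⁻¹)
            ≤ specNorm (L⁻¹ * (Hess x - L * L)) * specNorm L⁻¹ := e1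
          _ ≤ (σd⁻¹ * (σd ^ 2 * ε)) * σd⁻¹ := by
              refine mul_le_mul (le_trans e2 ?_) normLinv (specNorm_nonneg _) (by positivity)
              exact mul_le_mul normLinv (hnorm x) (specNorm_nonneg _) (by positivity)
      have heq : σd⁻¹ * (σd ^ 2 * ε) * σd⁻¹ = ε := by
        field_simp
      linarith
    calc specNorm (L⁻¹ * Hess x * L⁻¹)
        = specNorm (1 + L⁻¹ * (Hess x - L * L) * L⁻¹) := by rw [hkey]
      _ ≤ specNorm 1 + specNorm (L⁻¹ * (Hess x - L * L) * L⁻¹) := specNorm_add_le _ _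
      _ ≤ 1 + ε := add_le_add specNorm_one_le hE
  have hS2 : ∀ x, specNorm (L * (Hess x)⁻¹ * L) ≤ 1 + σ1 ^ 2 / m * ε := by
    intro x
    have hHeig : ∀ i, m ≤ (hHerm x).eigenvalues i := le_eig_of_psd (hHerm x) (hlow x)
    obtain ⟨hHinv_eq, hHH, hHH'⟩ :=
      inv_spectral (hHerm x) (fun i => ne_of_gt (lt_of_lt_of_le hm (hHeig i)))
    have normHinv : specNorm (Hess x)⁻¹ ≤ m⁻¹ := by
      rw [hHinv_eq]
      refine specNorm_conj_le (hHerm x).eigenvectorUnitary.2 (by positivity) fun i => ?_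
      rw [abs_of_nonneg (inv_nonneg.mpr (le_trans hm.le (hHeig i)))]
      exact inv_anti₀ hm (hHeig i)
    have h2a : L * (Hess x)⁻¹ * (L * L) * L⁻¹ = L * (Hess x)⁻¹ * L := by
      rw [Matrix.mul_assoc (L * (Hess x)⁻¹) (L * L) L⁻¹, Matrix.mul_assoc L L L⁻¹, hLL,
        Matrix.mul_one]
    have h2b : L * (Hess x)⁻¹ * Hess x * L⁻¹ = 1 := by
      rw [Matrix.mul_assoc L (Hess x)⁻¹ (Hess x), hHH', Matrix.mul_one, hLL]
    have hkey : L * (Hess x)⁻¹ * L = 1 + L * (Hess x)⁻¹ * (L * L - Hess x) * L⁻¹ := by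
      rw [Matrix.mul_sub, Matrix.sub_mul, h2a, h2b]
      abel
    have hneg : specNorm (L * L - Hess x) = specNorm (Hess x - L * L) := by
      rw [show L * L - Hess x = -(Hess x - L * L) from (neg_sub _ _).symm, specNorm_neg]
    have hE : specNorm (L * (Hess x)⁻¹ * (L * L - Hess x) * L⁻¹) ≤ σ1 ^ 2 / m * ε := by
      have e1 := specNorm_mul_le (L * (Hess x)⁻¹ * (L * L - Hess x)) L⁻¹
      have e2 := specNorm_mul_le (L * (Hess x)⁻¹) (L * L - Hess x)
      have e3 := specNorm_mul_le L (Hess x)⁻¹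
      have step : specNorm (L * (Hess x)⁻¹ * (L * L - Hess x) * L⁻¹)
          ≤ σ1 * m⁻¹ * (σd ^ 2 * ε) * σd⁻¹ := by
        calc specNorm (L * (Hess x)⁻¹ * (L * L - Hess x) * L⁻¹)
            ≤ specNorm (L * (Hess x)⁻¹ * (L * L - Hess x)) * specNorm L⁻¹ := e1
          _ ≤ (σ1 * m⁻¹ * (σd ^ 2 * ε)) * σd⁻¹ := by
              refine mul_le_mul (le_trans e2 ?_) normLinv (specNorm_nonneg _) (by positivity)
              refine mul_le_mul (le_trans e3 ?_) ?_ (specNorm_nonneg _) (by positivity)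
              · exact mul_le_mul normL normHinv (specNorm_nonneg _) hσ1_pos.le
              · rw [hneg]; exact hnorm x
      have heq : σ1 * m⁻¹ * (σd ^ 2 * ε) * σd⁻¹ = σ1 * σd * ε / m := by
        field_simp
      have hle : σ1 * σd * ε / m ≤ σ1 ^ 2 / m * ε := by
        rw [show σ1 ^ 2 / m * ε = σ1 * σ1 * ε / m from by ring]
        gcongr
      linarith
    calc specNorm (L * (Hess x)⁻¹ * L)
        = specNorm (1 + L * (Hess x)⁻¹ * (L * L - Hess x) * L⁻¹) := by rw [hkey]
      _ ≤ specNorm 1 + specNorm (L * (Hess x)⁻¹ * (L * L - Hess x) * L⁻¹) := specNorm_add_le _ _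
      _ ≤ 1 + σ1 ^ 2 / m * ε := add_le_add specNorm_one_le hE
  have h1 : (⨆ x, specNorm (L⁻¹ * Hess x * L⁻¹)) ≤ 1 + ε := ciSup_le hS1
  have h2 : (⨆ x, specNorm (L * (Hess x)⁻¹ * L)) ≤ 1 + σ1 ^ 2 / m * ε := ciSup_le hS2
  have h2n : 0 ≤ ⨆ x, specNorm (L * (Hess x)⁻¹ * L) :=
    Real.iSup_nonneg fun x => specNorm_nonneg _
  exact mul_le_mul h1 h2 h2n (by linarith)

end Aux

/-- Theorem kappa_L_bound_3: bound on the preconditioned condition number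
`κ_L = sup_x ‖L⁻¹ ∇²U(x) L⁻¹‖ · sup_x ‖L ∇²U(x)⁻¹ L‖`.  The Hessian field is represented by
the matrix family `Hess`. -/
theorem stmt_5 {d : ℕ} (hd : 0 < d)
    (Hess : (Fin d → ℝ) → Matrix (Fin d) (Fin d) ℝ)
    (L : Matrix (Fin d) (Fin d) ℝ) (hL : L.PosDef)
    (m M ε : ℝ) (hm : 0 < m) (hmM : m ≤ M) (hε : 0 < ε)
    (hHerm : ∀ x, (Hess x).IsHermitian)
    (hlow : ∀ x, (Hess x - m • (1 : Matrix (Fin d) (Fin d) ℝ)).PosSemidef)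
    (hup : ∀ x, (M • (1 : Matrix (Fin d) (Fin d) ℝ) - Hess x).PosSemidef)
    (hnorm : ∀ x, specNorm (Hess x - L * L) ≤
      (ithEig L hL.isHermitian ⟨d - 1, by omega⟩) ^ 2 * ε) :
    (⨆ x, specNorm (L⁻¹ * Hess x * L⁻¹)) * (⨆ x, specNorm (L * (Hess x)⁻¹ * L)) ≤
      (1 + ε) * (1 + (ithEig L hL.isHermitian ⟨0, hd⟩) ^ 2 / m * ε) := by
  have hlen : (eigList L hL.isHermitian).length = d := eigList_length L hL.isHermitian
  have hsort := eigList_sorted L hL.isHermitian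
  have hne : eigList L hL.isHermitian ≠ [] := by
    intro h
    rw [h] at hlen
    simp at hlen
    omega
  have hσd0 : ithEig L hL.isHermitian ⟨d - 1, by omega⟩
      = (eigList L hL.isHermitian).getD 0 0 := by
    simp [ithEig]
  have hσ11 : ithEig L hL.isHermitian ⟨0, hd⟩
      = (eigList L hL.isHermitian).getD (d - 1) 0 := by
    simp [ithEig]
  have hσd_le : ∀ i, ithEig L hL.isHermitian ⟨d - 1, by omega⟩ ≤ hL.isHermitian.eigenvalues i := by
    intro i
    rw [hσd0]
    exact sorted_getD_zero_le hsort (mem_eigList L hL.isHermitian i)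
  have hle_σ1 : ∀ i, hL.isHermitian.eigenvalues i ≤ ithEig L hL.isHermitian ⟨0, hd⟩ := by
    intro i
    rw [hσ11]
    have h := sorted_le_getD_last hsort (mem_eigList L hL.isHermitian i)
    rwa [hlen] at h
  have hσd_pos : 0 < ithEig L hL.isHermitian ⟨d - 1, by omega⟩ := by
    obtain ⟨i, hi⟩ := eigList_mem_eig L hL.isHermitian (getD_zero_mem hne)
    rw [hσd0, ← hi]
    exact hL.eigenvalues_pos i
  exact kappa_aux hd Hess L hL m ε _ _ hm hε hHerm hlow hσd_le hle_σ1 hσd_pos hnorm
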